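/- arXiv:1805.00349 — 6 statements merged into one kernel-verified Lean document; each statement's English description precedes it below -/
import Mathlib

section
/- Every connected component of a PL subset of V is PL. -/
open Set

/-- An (open or closed) affine half-space in a real vector space. -/
def IsHalfspace {V : Type*} [AddCommGroup V] [Module ℝ V] (H : Set V) : Prop :=
  ∃ (f : V →ₗ[ℝ] ℝ) (c : ℝ), H = {x | f x < c} ∨ H = {x | f x ≤ c}

/-- A convex polyhedron: the intersection of finitely many open or closed affine
half-spaces (the empty intersection being the whole space). -/
def IsConvexPolyhedron {V : Type*} [AddCommGroup V] [Module ℝ V] (P : Set V) : Prop :=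
  ∃ (n : ℕ) (H : Fin n → Set V), (∀ i, IsHalfspace (H i)) ∧ P = ⋂ i, H i

/-- A PL (piecewise linear) set: a finite union of convex polyhedra. -/
def IsPL {V : Type*} [AddCommGroup V] [Module ℝ V] (S : Set V) : Prop :=
  ∃ (n : ℕ) (P : Fin n → Set V), (∀ i, IsConvexPolyhedron (P i)) ∧ S = ⋃ i, P i

lemma IsConvexPolyhedron.convex {V : Type*} [AddCommGroup V] [Module ℝ V] {P : Set V}
    (h : IsConvexPolyhedron P) : Convex ℝ P := by
  obtain ⟨n, H, hH, rfl⟩ := h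
  refine convex_iInter fun i => ?_
  obtain ⟨f, c, hc | hc⟩ := hH i
  · rw [hc]; exact convex_halfSpace_lt f.isLinear c
  · rw [hc]; exact convex_halfSpace_le f.isLinear c

theorem PL_connectedComponent {V : Type*} [NormedAddCommGroup V] [NormedSpace ℝ V]
    [FiniteDimensional ℝ V] (Z : Set V) (hZ : IsPL Z) (x : V) (hx : x ∈ Z) :
    IsPL (connectedComponentIn Z x) := by
  classical
  obtain ⟨n, P, hP, rfl⟩ := hZ
  set C := connectedComponentIn (⋃ i, P i) x with hC
  have hxC : x ∈ C := mem_connectedComponentIn hx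
  have key : ∀ i, (P i ∩ C).Nonempty → P i ⊆ C := by
    intro i ⟨y, hyP, hyC⟩
    have hCy : C = connectedComponentIn (⋃ i, P i) y :=
      connectedComponentIn_eq hyC
    rw [hCy]
    exact IsPreconnected.subset_connectedComponentIn
      ((hP i).convex.isPreconnected) hyP (subset_iUnion P i)
  obtain ⟨i₀, hxi₀⟩ := mem_iUnion.mp hx
  have hi₀ : (P i₀ ∩ C).Nonempty := ⟨x, hxi₀, hxC⟩
  refine ⟨n, fun i => if (P i ∩ C).Nonempty then P i else P i₀, fun i => ?_, ?_⟩
  · show IsConvexPolyhedron (if (P i ∩ C).Nonempty then P i else P i₀)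
    split <;> exact hP _
  · apply subset_antisymm
    · intro z hz
      obtain ⟨j, hj⟩ := mem_iUnion.mp (connectedComponentIn_subset _ _ hz)
      refine mem_iUnion.mpr ⟨j, ?_⟩
      rw [if_pos ⟨z, hj, hz⟩]
      exact hj
    · refine iUnion_subset fun i => ?_
      show (if (P i ∩ C).Nonempty then P i else P i₀) ⊆ C
      split
      · exact key i (by assumption)
      · exact key i₀ hi₀
end

section
/- Let u : V → W be a linear map. If S ⊆ V is PL, then the image u(S) ⊆ W is PL. -/
open Set

/-!
Fourier–Motzkin elimination, with Helly's theorem on the line doing the bookkeeping. Write every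
halfspace as `f ⁻¹' I` with `I` a lower set of `ℝ`. The fibre over `x` of `⋂ i, H i ⊆ ℝ × U` is an
intersection of intervals, so it is nonempty as soon as the fibres of any two `H i` meet: the
projection to `U` is `⋂ i j, snd '' (H i ∩ H j)`. Once the `ℝ`-coefficients are normalised to
`±1`, the projection of two halfspaces is everything or nothing when the coefficients agree, and
`(g + g') ⁻¹' (I + J)` when they are opposite, so it is again a polyhedron.

A linear map `u` with `u v = 0`, `v ≠ 0`, factors through this projection after splitting
`V = ℝ v ⊕ M`, which lowers the dimension; an injective `u` has a linear left inverse `g` and maps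
`P` onto `g ⁻¹' P ∩ range u`.
-/

open Pointwise

theorem IsLowerSet.eq_empty_or_eq_univ_or_Iio_or_Iic {I : Set ℝ} (hI : IsLowerSet I) :
    I = ∅ ∨ I = univ ∨ ∃ c, I = Iio c ∨ I = Iic c := by
  rcases I.eq_empty_or_nonempty with h | hne
  · exact Or.inl h
  by_cases hbdd : BddAbove I
  · refine Or.inr (Or.inr ⟨sSup I, ?_⟩)
    by_cases hmem : sSup I ∈ I
    · exact Or.inr (Subset.antisymm (fun x hx => le_csSup hbdd hx) fun x hx => hI hx hmem)
    · refine Or.inl (Subset.antisymm (fun x hx => ?_) fun x hx => ?_)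
      · exact (le_csSup hbdd hx).lt_of_ne (by rintro rfl; exact hmem hx)
      · obtain ⟨y, hy, hxy⟩ := exists_lt_of_lt_csSup hne hx
        exact hI hxy.le hy
  · refine Or.inr (Or.inl (eq_univ_of_forall fun x => ?_))
    obtain ⟨y, hy, hxy⟩ := not_bddAbove_iff.mp hbdd x
    exact hI hxy.le hy

theorem IsLowerSet.exists_add_mem_and_add_mem_iff {I J : Set ℝ} (hI : IsLowerSet I)
    (hJ : IsLowerSet J) (p q : ℝ) : (∃ s, s + p ∈ I ∧ s + q ∈ J) ↔ I.Nonempty ∧ J.Nonempty := by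
  refine ⟨fun ⟨s, hs, hs'⟩ => ⟨⟨_, hs⟩, ⟨_, hs'⟩⟩, fun ⟨⟨i, hi⟩, ⟨j, hj⟩⟩ => ?_⟩
  refine ⟨min (i - p) (j - q), hI ?_ hi, hJ ?_ hj⟩
  · linarith [min_le_left (i - p) (j - q)]
  · linarith [min_le_right (i - p) (j - q)]

theorem exists_add_mem_and_neg_add_mem_iff {I J : Set ℝ} (p q : ℝ) :
    (∃ s, s + p ∈ I ∧ -s + q ∈ J) ↔ p + q ∈ I + J := by
  constructor
  · rintro ⟨s, hs, hs'⟩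
    exact ⟨_, hs, _, hs', by ring⟩
  · rintro ⟨i, hi, j, hj, hij⟩
    refine ⟨i - p, by rwa [sub_add_cancel], ?_⟩
    convert hj using 1
    linarith

theorem Convex.helly_theorem_real {ι : Type*} [Fintype ι] {F : ι → Set ℝ}
    (hF : ∀ i, Convex ℝ (F i)) (hF₂ : ∀ i j, (F i ∩ F j).Nonempty) : (⋂ i, F i).Nonempty := by
  classical
  have hHelly := Convex.helly_theorem' (s := Finset.univ) (fun i _ => hF i) fun I _ hI => by
    rw [Module.finrank_self] at hI
    rcases I.eq_empty_or_nonempty with rfl | ⟨i, hi⟩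
    · simp
    have : Nonempty ι := ⟨i⟩
    obtain ⟨j, hj⟩ : ∃ j, I.erase i ⊆ {j} :=
      Finset.card_le_one_iff_subset_singleton.mp (by rw [Finset.card_erase_of_mem hi]; omega)
    refine (hF₂ i j).mono fun x hx => mem_iInter₂.mpr fun k hk => ?_
    rcases eq_or_ne k i with rfl | hki
    · exact hx.1
    · rw [Finset.mem_singleton.mp (hj (Finset.mem_erase.mpr ⟨hki, hk⟩))]
      exact hx.2
  simpa using hHelly

section Polyhedra

variable {V W : Type*} [AddCommGroup V] [Module ℝ V] [AddCommGroup W] [Module ℝ W]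

theorem isHalfspace_iff {H : Set V} :
    IsHalfspace H ↔ ∃ (f : V →ₗ[ℝ] ℝ) (I : Set ℝ), IsLowerSet I ∧ H = f ⁻¹' I := by
  constructor
  · rintro ⟨f, c, rfl | rfl⟩
    · exact ⟨f, Iio c, isLowerSet_Iio c, rfl⟩
    · exact ⟨f, Iic c, isLowerSet_Iic c, rfl⟩
  · rintro ⟨f, I, hI, rfl⟩
    rcases hI.eq_empty_or_eq_univ_or_Iio_or_Iic with rfl | rfl | ⟨c, rfl | rfl⟩
    · exact ⟨0, 0, Or.inl (by ext; simp)⟩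
    · exact ⟨0, 0, Or.inr (by ext; simp)⟩
    · exact ⟨f, c, Or.inl rfl⟩
    · exact ⟨f, c, Or.inr rfl⟩

theorem IsHalfspace.preimage {H : Set W} (hH : IsHalfspace H) (u : V →ₗ[ℝ] W) :
    IsHalfspace (u ⁻¹' H) := by
  obtain ⟨f, c, rfl | rfl⟩ := hH
  exacts [⟨f ∘ₗ u, c, Or.inl rfl⟩, ⟨f ∘ₗ u, c, Or.inr rfl⟩]

theorem IsHalfspace.convex {H : Set V} (hH : IsHalfspace H) : Convex ℝ H := by
  obtain ⟨f, I, hI, rfl⟩ := isHalfspace_iff.mp hH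
  exact hI.ordConnected.convex.linear_preimage f

theorem isConvexPolyhedron_iInter_of_isHalfspace {ι : Type*} [Finite ι] {H : ι → Set V}
    (hH : ∀ i, IsHalfspace (H i)) : IsConvexPolyhedron (⋂ i, H i) := by
  obtain ⟨n, ⟨e⟩⟩ := Finite.exists_equiv_fin ι
  exact ⟨n, H ∘ e.symm, fun i => hH _, (e.symm.surjective.iInter_comp H).symm⟩

theorem IsHalfspace.isConvexPolyhedron {H : Set V} (hH : IsHalfspace H) :
    IsConvexPolyhedron H :=
  ⟨1, fun _ => H, fun _ => hH, (iInter_const H).symm⟩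

theorem isConvexPolyhedron_iInter {ι : Type*} [Finite ι] {P : ι → Set V}
    (hP : ∀ i, IsConvexPolyhedron (P i)) : IsConvexPolyhedron (⋂ i, P i) := by
  choose n H hH hP using hP
  rw [iInter_congr hP, ← iInter_sigma (fun k : Σ i, Fin (n i) => H k.1 k.2)]
  exact isConvexPolyhedron_iInter_of_isHalfspace fun k => hH k.1 k.2

theorem IsConvexPolyhedron.inter {P Q : Set V} (hP : IsConvexPolyhedron P)
    (hQ : IsConvexPolyhedron Q) : IsConvexPolyhedron (P ∩ Q) := by
  rw [inter_eq_iInter]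
  exact isConvexPolyhedron_iInter (Bool.forall_bool.mpr ⟨hQ, hP⟩)

theorem IsConvexPolyhedron.preimage {P : Set W} (hP : IsConvexPolyhedron P) (u : V →ₗ[ℝ] W) :
    IsConvexPolyhedron (u ⁻¹' P) := by
  obtain ⟨n, H, hH, rfl⟩ := hP
  exact ⟨n, fun i => u ⁻¹' H i, fun i => (hH i).preimage u, preimage_iInter⟩

theorem LinearMap.isConvexPolyhedron_ker (f : V →ₗ[ℝ] ℝ) :
    IsConvexPolyhedron (LinearMap.ker f : Set V) := by
  have hker : (LinearMap.ker f : Set V) = {x | f x ≤ 0} ∩ {x | (-f) x ≤ 0} := by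
    ext x
    simp [le_antisymm_iff]
  rw [hker]
  exact IsHalfspace.isConvexPolyhedron ⟨f, 0, Or.inr rfl⟩ |>.inter
    (IsHalfspace.isConvexPolyhedron ⟨-f, 0, Or.inr rfl⟩)

theorem Submodule.isConvexPolyhedron [FiniteDimensional ℝ V] (M : Submodule ℝ V) :
    IsConvexPolyhedron (M : Set V) := by
  let b := Module.finBasis ℝ (V ⧸ M)
  have hM : (M : Set V) = ⋂ i, (LinearMap.ker (b.coord i ∘ₗ M.mkQ) : Set V) := by
    ext x
    simp only [SetLike.mem_coe, mem_iInter, LinearMap.mem_ker, LinearMap.comp_apply,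
      b.forall_coord_eq_zero_iff, Submodule.mkQ_apply, Submodule.Quotient.mk_eq_zero]
  rw [hM]
  exact isConvexPolyhedron_iInter fun i => LinearMap.isConvexPolyhedron_ker _

end Polyhedra

section Projection

variable {U : Type*} [AddCommGroup U] [Module ℝ U]

theorem Convex.preimage_prodMk_left {H : Set (ℝ × U)} (hH : Convex ℝ H) (x : U) :
    Convex ℝ ((·, x) ⁻¹' H) := by
  have hfiber : (·, x) ⁻¹' H = LinearMap.inl ℝ ℝ U ⁻¹' ((· + (0, x)) ⁻¹' H) := by
    ext t
    simp
  rw [hfiber]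
  exact (hH.translate_preimage_left (0, x)).linear_preimage _

theorem image_snd_iInter_eq {ι : Type*} [Fintype ι] {H : ι → Set (ℝ × U)}
    (hH : ∀ i, Convex ℝ (H i)) :
    Prod.snd '' ⋂ i, H i = ⋂ i, ⋂ j, Prod.snd '' (H i ∩ H j) := by
  refine Subset.antisymm
    (subset_iInter₂ fun i j => image_mono (subset_inter (iInter_subset _ i) (iInter_subset _ j)))
    fun x hx => ?_
  have hpair : ∀ i j, ((·, x) ⁻¹' H i ∩ (·, x) ⁻¹' H j).Nonempty := by
    intro i j
    obtain ⟨⟨t, x'⟩, ht, rfl⟩ := mem_iInter₂.mp hx i j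
    exact ⟨t, ht⟩
  obtain ⟨t, ht⟩ := Convex.helly_theorem_real (fun i => (hH i).preimage_prodMk_left x) hpair
  exact ⟨(t, x), mem_iInter.mpr fun i => mem_iInter.mp ht i, rfl⟩

theorem LinearMap.apply_eq_mul_fst_add_snd (f : ℝ × U →ₗ[ℝ] ℝ) (p : ℝ × U) :
    f p = f (1, 0) * p.1 + (f ∘ₗ LinearMap.inr ℝ ℝ U) p.2 := by
  calc f p = f (p.1 • (1, 0) + (0, p.2)) := by simp
    _ = _ := by rw [map_add, map_smul, smul_eq_mul, mul_comm]; rfl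

theorem IsHalfspace.eq_preimage_snd_or_eq_setOf {H : Set (ℝ × U)} (hH : IsHalfspace H) :
    (∃ Q, IsHalfspace Q ∧ H = Prod.snd ⁻¹' Q) ∨
      ∃ (ε : ℝ) (g : U →ₗ[ℝ] ℝ) (I : Set ℝ), ε * ε = 1 ∧ IsLowerSet I ∧
        H = {p | ε * p.1 + g p.2 ∈ I} := by
  obtain ⟨f, I, hI, rfl⟩ := isHalfspace_iff.mp hH
  set a := f (1, 0)
  set g := f ∘ₗ LinearMap.inr ℝ ℝ U
  have hf : ∀ p, f p = a * p.1 + g p.2 := f.apply_eq_mul_fst_add_snd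
  by_cases ha : a = 0
  · refine Or.inl ⟨g ⁻¹' I, isHalfspace_iff.mpr ⟨g, I, hI, rfl⟩, ?_⟩
    ext p
    simp [hf, ha]
  · have hr : 0 < |a| := abs_pos.mpr ha
    refine Or.inr ⟨a / |a|, |a|⁻¹ • g, (|a| * ·) ⁻¹' I, ?_,
      hI.preimage fun _ _ h => mul_le_mul_of_nonneg_left h hr.le, ?_⟩
    · rw [div_mul_div_comm, abs_mul_abs_self, div_self (mul_self_ne_zero.mpr ha)]
    · ext p
      simp only [mem_preimage, mem_ofPred_eq, LinearMap.smul_apply, smul_eq_mul, hf]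
      field_simp

theorem image_snd_inter_setOf_eq {ε ε' : ℝ} (hε : ε * ε = 1) (g g' : U →ₗ[ℝ] ℝ)
    (I J : Set ℝ) :
    Prod.snd '' ({p : ℝ × U | ε * p.1 + g p.2 ∈ I} ∩ {p | ε' * p.1 + g' p.2 ∈ J}) =
      {x | ∃ s, s + g x ∈ I ∧ (ε * ε') * s + g' x ∈ J} := by
  ext x
  constructor
  · rintro ⟨⟨t, x⟩, ⟨ht, ht'⟩, rfl⟩
    refine ⟨ε * t, ht, ?_⟩
    rwa [show ε * ε' * (ε * t) = ε' * t by linear_combination (ε' * t) * hε]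
  · rintro ⟨s, hs, hs'⟩
    refine ⟨(ε * s, x), ⟨?_, ?_⟩, rfl⟩
    · show ε * (ε * s) + g x ∈ I
      rwa [← mul_assoc, hε, one_mul]
    · show ε' * (ε * s) + g' x ∈ J
      rwa [mul_left_comm, ← mul_assoc]

theorem isConvexPolyhedron_image_snd_inter_setOf {ε ε' : ℝ} (hε : ε * ε = 1)
    (hε' : ε' * ε' = 1) (g g' : U →ₗ[ℝ] ℝ) {I J : Set ℝ} (hI : IsLowerSet I)
    (hJ : IsLowerSet J) :
    IsConvexPolyhedron
      (Prod.snd '' ({p : ℝ × U | ε * p.1 + g p.2 ∈ I} ∩ {p | ε' * p.1 + g' p.2 ∈ J})) := by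
  rw [image_snd_inter_setOf_eq hε]
  rcases mul_self_eq_one_iff.mp (show ε * ε' * (ε * ε') = 1 by
    rw [mul_mul_mul_comm, hε, hε', one_mul]) with h | h
  · have hconst : {x | ∃ s, s + g x ∈ I ∧ (ε * ε') * s + g' x ∈ J} =
        (0 : U →ₗ[ℝ] ℝ) ⁻¹' {_y | I.Nonempty ∧ J.Nonempty} := by
      ext x
      simp only [h, one_mul, mem_ofPred_eq, mem_preimage]
      exact hI.exists_add_mem_and_add_mem_iff hJ _ _
    rw [hconst]
    exact (isHalfspace_iff.mpr ⟨0, _, fun _ _ _ h => h, rfl⟩).isConvexPolyhedron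
  · have hsum : {x | ∃ s, s + g x ∈ I ∧ (ε * ε') * s + g' x ∈ J} = (g + g') ⁻¹' (I + J) := by
      ext x
      simp only [h, neg_one_mul, mem_ofPred_eq, mem_preimage, LinearMap.add_apply]
      exact exists_add_mem_and_neg_add_mem_iff _ _
    rw [hsum]
    exact (isHalfspace_iff.mpr ⟨g + g', _, hI.add_right, rfl⟩).isConvexPolyhedron

theorem IsHalfspace.isConvexPolyhedron_image_snd {H : Set (ℝ × U)} (hH : IsHalfspace H) :
    IsConvexPolyhedron (Prod.snd '' H) := by
  rcases hH.eq_preimage_snd_or_eq_setOf with ⟨Q, hQ, rfl⟩ | ⟨ε, g, I, hε, hI, rfl⟩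
  · rw [image_preimage_eq _ Prod.snd_surjective]
    exact hQ.isConvexPolyhedron
  · rw [← inter_self {p : ℝ × U | ε * p.1 + g p.2 ∈ I}]
    exact isConvexPolyhedron_image_snd_inter_setOf hε hε g g hI hI

theorem IsHalfspace.isConvexPolyhedron_image_snd_inter {H H' : Set (ℝ × U)} (hH : IsHalfspace H)
    (hH' : IsHalfspace H') : IsConvexPolyhedron (Prod.snd '' (H ∩ H')) := by
  rcases hH.eq_preimage_snd_or_eq_setOf with ⟨Q, hQ, rfl⟩ | ⟨ε, g, I, hε, hI, rfl⟩
  · rw [inter_comm, image_inter_preimage]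
    exact hH'.isConvexPolyhedron_image_snd.inter hQ.isConvexPolyhedron
  rcases hH'.eq_preimage_snd_or_eq_setOf with ⟨Q, hQ, rfl⟩ | ⟨ε', g', J, hε', hJ, rfl⟩
  · rw [image_inter_preimage]
    exact hH.isConvexPolyhedron_image_snd.inter hQ.isConvexPolyhedron
  · exact isConvexPolyhedron_image_snd_inter_setOf hε hε' g g' hI hJ

theorem IsConvexPolyhedron.image_snd {P : Set (ℝ × U)} (hP : IsConvexPolyhedron P) : IsConvexPolyhedron (Prod.snd '' P) := by
  obtain ⟨n, H, hH, rfl⟩ := hP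
  rw [image_snd_iInter_eq fun i => (hH i).convex]
  exact isConvexPolyhedron_iInter fun i => isConvexPolyhedron_iInter fun j =>
    (hH i).isConvexPolyhedron_image_snd_inter (hH j)

end Projection

section Image

variable {V W : Type*} [AddCommGroup V] [Module ℝ V] [AddCommGroup W] [Module ℝ W]

theorem LinearMap.image_eq_image_snd_preimage_coprod (u : V →ₗ[ℝ] W) {v : V} (hv : u v = 0)
    {M : Submodule ℝ V} (hM : IsCompl (Submodule.span ℝ {v}) M) (P : Set V) :
    u '' P = (u ∘ₗ M.subtype) ''
      (Prod.snd '' ((LinearMap.toSpanSingleton ℝ V v).coprod M.subtype ⁻¹' P)) := by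
  set E := (LinearMap.toSpanSingleton ℝ V v).coprod M.subtype
  have hE : Function.Surjective E := by
    rw [← LinearMap.range_eq_top, LinearMap.range_coprod, ← LinearMap.span_singleton_eq_range,
      Submodule.range_subtype, hM.sup_eq_top]
  have huE : ⇑u ∘ ⇑E = ⇑(u ∘ₗ M.subtype) ∘ Prod.snd := by
    funext p
    simp [E, hv]
  rw [← image_comp, ← huE, image_comp, image_preimage_eq P hE]

theorem IsConvexPolyhedron.image [FiniteDimensional ℝ V] [FiniteDimensional ℝ W] {P : Set V}
    (hP : IsConvexPolyhedron P) (u : V →ₗ[ℝ] W) : IsConvexPolyhedron (u '' P) := by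
  induction hn : Module.finrank ℝ V using Nat.strong_induction_on generalizing V with
  | _ n ih =>
    by_cases hker : LinearMap.ker u = ⊥
    · obtain ⟨g, hg⟩ := u.exists_leftInverse_of_injective hker
      rw [Function.LeftInverse.image_eq (g := g) (LinearMap.congr_fun hg), ← LinearMap.coe_range]
      exact (LinearMap.range u).isConvexPolyhedron.inter (hP.preimage g)
    obtain ⟨v, hv, hv0⟩ := (Submodule.ne_bot_iff _).mp hker
    obtain ⟨M, hM⟩ := Submodule.exists_isCompl (Submodule.span ℝ {v})
    have hdim : Module.finrank ℝ M < n := by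
      have hsum := Submodule.finrank_add_eq_of_isCompl hM
      rw [finrank_span_singleton hv0] at hsum
      omega
    rw [u.image_eq_image_snd_preimage_coprod hv hM]
    exact ih _ hdim (hP.preimage _).image_snd _ rfl

end Image

theorem PL_image {V W : Type*} [NormedAddCommGroup V] [NormedSpace ℝ V]
    [FiniteDimensional ℝ V] [NormedAddCommGroup W] [NormedSpace ℝ W]
    [FiniteDimensional ℝ W] (u : V →ₗ[ℝ] W) (S : Set V) (hS : IsPL S) :
    IsPL (u '' S) := by
  obtain ⟨n, P, hP, rfl⟩ := hS
  exact ⟨n, fun i => u '' P i, fun i => (hP i).image u, image_iUnion⟩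
end

section
/- Let λ ⊆ V × V* be a nonempty affine subspace which is conic in the fiber variable, i.e. (x, tξ) ∈ λ whenever (x, ξ) ∈ λ and t > 0, and whose direction (the linear subspace of translations of λ) is isotropic for ω, i.e. ω(v, w) = 0 for all v, w in the direction of λ. Then there exists an affine subspace L ⊆ V such that λ ⊆ T*_L V := {(x, ξ) ∈ V × V* | x ∈ L and ξ(w) = 0 for every w in the direction of L}. -/
open Set

theorem isotropic_conic_affine_in_conormal {V : Type*} [AddCommGroup V] [Module ℝ V]
    [FiniteDimensional ℝ V]
    (Lam : AffineSubspace ℝ (V × Module.Dual ℝ V))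
    (hne : (Lam : Set (V × Module.Dual ℝ V)).Nonempty)
    (hconic : ∀ x : V, ∀ ξ : Module.Dual ℝ V, (x, ξ) ∈ Lam →
      ∀ t : ℝ, 0 < t → (x, t • ξ) ∈ Lam)
    (hisot : ∀ p ∈ Lam.direction, ∀ q ∈ Lam.direction,
      (p : V × Module.Dual ℝ V).2 (q : V × Module.Dual ℝ V).1
        - (q : V × Module.Dual ℝ V).2 (p : V × Module.Dual ℝ V).1 = 0) :
    ∃ L : AffineSubspace ℝ V, ∀ p : V × Module.Dual ℝ V, p ∈ Lam →
      p.1 ∈ L ∧ ∀ w ∈ L.direction, p.2 w = 0 := by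
  refine ⟨Lam.map (LinearMap.fst ℝ V (Module.Dual ℝ V)).toAffineMap, ?_⟩
  rintro ⟨x, ξ⟩ hp
  constructor
  · exact AffineSubspace.mem_map.2 ⟨(x, ξ), hp, rfl⟩
  · intro w hw
    rw [AffineSubspace.map_direction] at hw
    obtain ⟨q, hq, rfl⟩ := hw
    have h2 : (x, (2:ℝ) • ξ) ∈ Lam := hconic x ξ hp 2 (by norm_num)
    have hξ : ((0 : V), ξ) ∈ Lam.direction := by
      have := AffineSubspace.vsub_mem_direction h2 hp
      simpa [vsub_eq_sub, Prod.ext_iff, two_smul] using this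
    have := hisot (0, ξ) hξ q hq
    simpa using this
end

section
/- Let U ⊆ V be an open set with U + γ = U (a γ-open set) and let x₀ be a boundary point of U. Then there exist an open neighborhood V' of x₀, an open subset W of V, a homeomorphism φ : V' → W such that both φ and φ⁻¹ are Lipschitz (with respect to any norm on V), and a nonzero linear functional ℓ on V, such that φ(V' ∩ U) = W ∩ {x ∈ V | ℓ(x) > 0}. -/
open Set Pointwise

/-- A cone in a real vector space: contains `0` and is stable under multiplication by
positive scalars. -/
def IsConeSet {V : Type*} [AddCommGroup V] [Module ℝ V] (c : Set V) : Prop :=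
  0 ∈ c ∧ ∀ t : ℝ, 0 < t → ∀ x ∈ c, t • x ∈ c

/-!
Pick `e` in the interior of `γ`, with `ball e ε ⊆ γ`. Then `U` absorbs the open cone over
`ball e ε`, so each line `x + ℝ e` meets `U` in an open half-line `(g x, ∞)`, and comparing `x`
with `y` through the cone shows that `g` is `ε⁻¹`-Lipschitz. Thus `U = {g < 0}` lies above the
Lipschitz graph `{g = 0}` in direction `e`. With `ℓ e = 1` and `c = ℓ + g`, which is constant
along `e`, the shear `x ↦ x - c x • e` is bi-Lipschitz with inverse `y ↦ y + c y • e`, and it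
maps `U` onto `{ℓ > 0}` because `ℓ (x - c x • e) = -g x`.
-/

open Metric NNReal

section Straightening

variable {V : Type*} [NormedAddCommGroup V] [NormedSpace ℝ V]

theorem LipschitzWith.smul_const {α : Type*} [PseudoMetricSpace α] {c : α → ℝ} {L : ℝ≥0}
    (hc : LipschitzWith L c) (e : V) : LipschitzWith (L * ‖e‖₊) fun x => c x • e :=
  LipschitzWith.of_dist_le_mul fun x y => by
    rw [dist_eq_norm, ← sub_smul, norm_smul, NNReal.coe_mul, coe_nnnorm, mul_right_comm]
    exact mul_le_mul_of_nonneg_right (hc.dist_le_mul x y) (norm_nonneg e)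

def shear (c : V → ℝ) (e x : V) : V := x + c x • e

theorem leftInverse_shear_neg {c : V → ℝ} {e : V} (hc : ∀ x (s : ℝ), c (x + s • e) = c x) :
    Function.LeftInverse (shear (-c) e) (shear c e) := fun x => by
  simp only [shear, Pi.neg_apply, hc]
  module

theorem lipschitzWith_shear {c : V → ℝ} {L : ℝ≥0} (hc : LipschitzWith L c) (e : V) :
    LipschitzWith (1 + L * ‖e‖₊) (shear c e) :=
  LipschitzWith.id.add (hc.smul_const e)

/-- `U + Γ ⊆ U` for the open cone `Γ = ⋃ t > 0, ball (t • e) (t * ε)`. -/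
structure AbsorbsCone (U : Set V) (e : V) (ε : ℝ) : Prop where
  pos : 0 < ε
  add_mem : ∀ x ∈ U, ∀ t : ℝ, 0 < t → ∀ w : V, ‖w‖ < t * ε → x + t • e + w ∈ U

theorem AbsorbsCone.of_add_subset {γ U : Set V} (hγ : IsConeSet γ) {e : V} {ε : ℝ} (hε : 0 < ε)
    (hball : ball e ε ⊆ γ) (hU : U + γ ⊆ U) : AbsorbsCone U e ε := by
  refine ⟨hε, fun x hx t ht w hw => ?_⟩
  have hw' : e + t⁻¹ • w ∈ ball e ε := by
    rw [mem_ball, dist_eq_norm, add_sub_cancel_left, norm_smul, norm_inv, Real.norm_of_nonneg ht.le,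
      inv_mul_lt_iff₀ ht]
    exact hw
  have hmem := hU (add_mem_add hx (hγ.2 t ht _ (hball hw')))
  rwa [smul_add, smul_inv_smul₀ ht.ne', ← add_assoc] at hmem

/-- The height over `x` of the graph bounding `U` from below in direction `e`; a junk value
unless `{t | x + t • e ∈ U}` is nonempty and bounded below. -/
noncomputable def heightFun (U : Set V) (e x : V) : ℝ := sInf {t : ℝ | x + t • e ∈ U}

namespace AbsorbsCone

variable {U : Set V} {e : V} {ε : ℝ}

theorem add_mem_of_div_lt (hU : AbsorbsCone U e ε) {x w : V} {t : ℝ} (hx : x ∈ U)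
    (h : ‖w‖ / ε < t) : x + t • e + w ∈ U := by
  have ht : 0 < t := (div_nonneg (norm_nonneg w) hU.pos.le).trans_lt h
  exact hU.add_mem x hx t ht w ((div_lt_iff₀ hU.pos).1 h)

theorem add_smul_mem (hU : AbsorbsCone U e ε) {x : V} {t : ℝ} (hx : x ∈ U) (ht : 0 ≤ t) :
    x + t • e ∈ U := by
  rcases ht.eq_or_lt with rfl | ht
  · simpa using hx
  · simpa using hU.add_mem x hx t ht 0 (by simpa using mul_pos ht hU.pos)

theorem exists_add_smul_mem (hU : AbsorbsCone U e ε) {a : V} (ha : a ∈ U) (x : V) :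
    ∃ t : ℝ, x + t • e ∈ U := by
  refine ⟨‖x - a‖ / ε + 1, ?_⟩
  have h := hU.add_mem_of_div_lt ha (lt_add_one (‖x - a‖ / ε))
  rwa [add_right_comm, add_sub_cancel] at h

theorem le_of_add_smul_mem (hU : AbsorbsCone U e ε) {x₀ x : V} {t : ℝ} (hx₀ : x₀ ∉ U)
    (h : x + t • e ∈ U) : -(‖x₀ - x‖ / ε) ≤ t := by
  by_contra! hlt
  have hmem := hU.add_mem_of_div_lt h (w := x₀ - x) (t := -t) (by linarith)
  exact hx₀ (by rwa [show x + t • e + (-t) • e + (x₀ - x) = x₀ by module] at hmem)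

theorem add_smul_mem_iff (hU : AbsorbsCone U e ε) (hUo : IsOpen U) {a x₀ : V} (ha : a ∈ U)
    (hx₀ : x₀ ∉ U) {x : V} {t : ℝ} : x + t • e ∈ U ↔ heightFun U e x < t := by
  have hbdd : BddBelow {t : ℝ | x + t • e ∈ U} :=
    ⟨-(‖x₀ - x‖ / ε), fun _ hs => hU.le_of_add_smul_mem hx₀ hs⟩
  constructor
  · intro h
    have hopen : IsOpen {s : ℝ | x + s • e ∈ U} :=
      hUo.preimage (continuous_const.add (continuous_id.smul continuous_const))
    obtain ⟨r, hr, hball⟩ := isOpen_iff.1 hopen t h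
    have hmem : t - r / 2 ∈ {s : ℝ | x + s • e ∈ U} :=
      hball (by rw [Real.ball_eq_Ioo]; constructor <;> linarith)
    exact (csInf_le hbdd hmem).trans_lt (by linarith)
  · intro h
    obtain ⟨s, hs, hst⟩ := exists_lt_of_csInf_lt (hU.exists_add_smul_mem ha x) h
    have hmem := hU.add_smul_mem hs (sub_nonneg.2 hst.le)
    rwa [add_assoc, ← add_smul, add_sub_cancel] at hmem

theorem mem_iff_heightFun_neg (hU : AbsorbsCone U e ε) (hUo : IsOpen U) {a x₀ : V} (ha : a ∈ U)
    (hx₀ : x₀ ∉ U) {x : V} : x ∈ U ↔ heightFun U e x < 0 := by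
  simpa using hU.add_smul_mem_iff hUo ha hx₀ (x := x) (t := 0)

theorem heightFun_add_smul (hU : AbsorbsCone U e ε) (hUo : IsOpen U) {a x₀ : V} (ha : a ∈ U)
    (hx₀ : x₀ ∉ U) (x : V) (s : ℝ) : heightFun U e (x + s • e) = heightFun U e x - s := by
  refine eq_of_forall_gt_iff fun t => ?_
  rw [← hU.add_smul_mem_iff hUo ha hx₀, add_assoc, ← add_smul, hU.add_smul_mem_iff hUo ha hx₀,
    sub_lt_iff_lt_add']

theorem lipschitzWith_heightFun (hU : AbsorbsCone U e ε) (hUo : IsOpen U) {a x₀ : V}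
    (ha : a ∈ U) (hx₀ : x₀ ∉ U) : LipschitzWith (ε⁻¹).toNNReal (heightFun U e) := by
  refine LipschitzWith.of_le_add_mul' _ fun y x => ?_
  by_contra! hlt
  obtain ⟨t, hxt, hty⟩ := exists_between (lt_sub_iff_add_lt.2 hlt)
  have hxt' := (hU.add_smul_mem_iff hUo ha hx₀).2 hxt
  have hdist : ‖y - x‖ / ε < heightFun U e y - t := by
    rw [div_eq_inv_mul, ← dist_eq_norm]
    linarith
  have hmem := hU.add_mem_of_div_lt hxt' hdist
  rw [show x + t • e + (heightFun U e y - t) • e + (y - x) = y + heightFun U e y • e by module,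
    hU.add_smul_mem_iff hUo ha hx₀] at hmem
  exact lt_irrefl _ hmem

theorem ne_zero (hU : AbsorbsCone U e ε) (hUo : IsOpen U) {a x₀ : V} (ha : a ∈ U)
    (hx₀ : x₀ ∉ U) : e ≠ 0 := by
  rintro rfl
  have h := hU.heightFun_add_smul hUo ha hx₀ x₀ 1
  rw [smul_zero, add_zero] at h
  linarith

end AbsorbsCone

end Straightening

theorem gammaOpen_biLipschitz_straightening_general {V : Type*} [NormedAddCommGroup V]
    [NormedSpace ℝ V] (γ : Set V)
    (hcone : IsConeSet γ) (hint : (interior γ).Nonempty)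
    (U : Set V) (hUopen : IsOpen U) (hUinv : U + γ = U)
    (x₀ : V) (hx₀ : x₀ ∈ frontier U) :
    ∃ (V' W' : Set V) (φ ψ : V → V) (K : NNReal) (ℓ : V →ₗ[ℝ] ℝ),
      IsOpen V' ∧ x₀ ∈ V' ∧ IsOpen W' ∧
      Set.BijOn φ V' W' ∧
      LipschitzOnWith K φ V' ∧ LipschitzOnWith K ψ W' ∧
      (∀ x ∈ V', ψ (φ x) = x) ∧ (∀ y ∈ W', φ (ψ y) = y) ∧
      ℓ ≠ 0 ∧ φ '' (V' ∩ U) = W' ∩ {x | 0 < ℓ x} := by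
  obtain ⟨e, he⟩ := hint
  obtain ⟨ε, hε, hball⟩ := isOpen_iff.1 isOpen_interior e he
  have hU := AbsorbsCone.of_add_subset hcone hε (hball.trans interior_subset) hUinv.le
  have hx₀U : x₀ ∉ U := fun h => hx₀.2 (hUopen.interior_eq.symm ▸ h)
  obtain ⟨a, ha⟩ : U.Nonempty := closure_nonempty_iff.1 ⟨x₀, hx₀.1⟩
  obtain ⟨ℓ, hℓe⟩ := SeparatingDual.exists_eq_one (R := ℝ) (hU.ne_zero hUopen ha hx₀U)
  have hg_add := hU.heightFun_add_smul hUopen ha hx₀U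
  set c : V → ℝ := fun x => ℓ x + heightFun U e x
  have hc_add : ∀ x (s : ℝ), c (x + s • e) = c x := fun x s => by
    simp only [c, map_add, map_smul, hℓe, hg_add, smul_eq_mul, mul_one]
    ring
  have hc_lip : LipschitzWith _ c := ℓ.lipschitz.add (hU.lipschitzWith_heightFun hUopen ha hx₀U)
  have hφψ := leftInverse_shear_neg hc_add
  have hψφ : Function.LeftInverse (shear c e) (shear (-c) e) := by
    simpa using leftInverse_shear_neg (c := -c) fun x s => by simp [hc_add]
  have hU_eq : U = shear (-c) e ⁻¹' {y | 0 < ℓ y} := by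
    ext x
    simp [shear, c, hℓe, hU.mem_iff_heightFun_neg hUopen ha hx₀U]
  refine ⟨univ, univ, shear (-c) e, shear c e, _, ℓ, isOpen_univ, mem_univ x₀, isOpen_univ,
    bijOn_univ.2 ⟨hψφ.injective, hφψ.surjective⟩,
    (lipschitzWith_shear hc_lip.neg e).lipschitzOnWith,
    (lipschitzWith_shear hc_lip e).lipschitzOnWith,
    fun x _ => hψφ x, fun y _ => hφψ y, fun h => by simpa [hℓe] using LinearMap.congr_fun h e, ?_⟩
  rw [univ_inter, univ_inter, hU_eq, image_preimage_eq _ hφψ.surjective]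
  rfl

theorem gammaOpen_biLipschitz_straightening {V : Type*} [NormedAddCommGroup V]
    [NormedSpace ℝ V] [FiniteDimensional ℝ V] (γ : Set V)
    (hcone : IsConeSet γ) (hclosed : IsClosed γ) (hconv : Convex ℝ γ)
    (hproper : γ ∩ (-γ) = {0}) (hint : (interior γ).Nonempty)
    (U : Set V) (hUopen : IsOpen U) (hUinv : U + γ = U)
    (x₀ : V) (hx₀ : x₀ ∈ frontier U) :
    ∃ (V' W' : Set V) (φ ψ : V → V) (K : NNReal) (ℓ : V →ₗ[ℝ] ℝ),
      IsOpen V' ∧ x₀ ∈ V' ∧ IsOpen W' ∧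
      Set.BijOn φ V' W' ∧
      LipschitzOnWith K φ V' ∧ LipschitzOnWith K ψ W' ∧
      (∀ x ∈ V', ψ (φ x) = x) ∧ (∀ y ∈ W', φ (ψ y) = y) ∧
      ℓ ≠ 0 ∧ φ '' (V' ∩ U) = W' ∩ {x | 0 < ℓ x} :=
  gammaOpen_biLipschitz_straightening_general γ hcone hint U hUopen hUinv x₀ hx₀
end

section
/- Let A ⊆ V be a closed subset. Then the addition map A × γ^a → V, (a, y) ↦ a + y, is a proper map (i.e. preimages of compact subsets of V are compact) if and only if A ∩ (x + γ) is compact for every x ∈ V. -/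
open Set Pointwise

/-- `A` is `γ`-open: open and invariant by addition of `γ`. -/
def GammaOpen {V : Type*} [AddCommGroup V] [Module ℝ V] [TopologicalSpace V]
    (γ A : Set V) : Prop :=
  IsOpen A ∧ A + γ = A

/-- `A` is `γ`-closed: closed and invariant by addition of `γ^a = -γ`. -/
def GammaClosed {V : Type*} [AddCommGroup V] [Module ℝ V] [TopologicalSpace V]
    (γ A : Set V) : Prop :=
  IsClosed A ∧ A + (-γ) = A

/-- `A` is `γ`-locally closed: the intersection of a `γ`-open set and a `γ`-closed set. -/
def GammaLocallyClosed {V : Type*} [AddCommGroup V] [Module ℝ V] [TopologicalSpace V]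
    (γ A : Set V) : Prop :=
  ∃ U C : Set V, GammaOpen γ U ∧ GammaClosed γ C ∧ A = U ∩ C

/-- `A` is `γ`-flat: `A = (A + γ) ∩ (A + γ^a)`. -/
def GammaFlat {V : Type*} [AddCommGroup V] [Module ℝ V] (γ A : Set V) : Prop :=
  A = (A + γ) ∩ (A + (-γ))


theorem gammaProper_iff_compact_inter {V : Type*} [NormedAddCommGroup V]
    [NormedSpace ℝ V] [FiniteDimensional ℝ V] (γ : Set V)
    (hcone : IsConeSet γ) (hclosed : IsClosed γ) (hconv : Convex ℝ γ)
    (hproper : γ ∩ (-γ) = {0}) (hint : (interior γ).Nonempty)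
    (A : Set V) (hA : IsClosed A) :
    (∀ K : Set V, IsCompact K →
        IsCompact ((A ×ˢ (-γ)) ∩ (fun p : V × V => p.1 + p.2) ⁻¹' K)) ↔
    (∀ x : V, IsCompact (A ∩ {y | y - x ∈ γ})) := by

  obtain ⟨-, hsmul⟩ := hcone
  have hadd : ∀ x ∈ γ, ∀ y ∈ γ, x + y ∈ γ := by
    intro x hx y hy
    have hm : (1/2:ℝ) • x + (1/2:ℝ) • y ∈ γ :=
      hconv hx hy (by norm_num) (by norm_num) (by norm_num)
    have h2 := hsmul 2 (by norm_num) _ hm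
    have heq : (2:ℝ) • ((1/2:ℝ) • x + (1/2:ℝ) • y) = x + y := by
      rw [smul_add, smul_smul, smul_smul]; norm_num
    rwa [heq] at h2
  constructor
  · intro h x
    have hS := h {x} isCompact_singleton
    have himg : A ∩ {y | y - x ∈ γ} =
        Prod.fst '' ((A ×ˢ (-γ)) ∩ (fun p : V × V => p.1 + p.2) ⁻¹' {x}) := by
      ext a
      constructor
      · rintro ⟨ha, hg⟩
        refine ⟨(a, x - a), ⟨⟨ha, ?_⟩, by simp⟩, rfl⟩
        rw [Set.mem_neg, neg_sub]
        exact hg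
      · rintro ⟨⟨b, y⟩, ⟨⟨hb, hy⟩, hsum⟩, rfl⟩
        simp only [Set.mem_preimage, Set.mem_singleton_iff] at hsum
        refine ⟨hb, ?_⟩
        have : b - x = -y := by rw [← hsum]; abel
        rw [Set.mem_setOf_eq, this]
        rwa [Set.mem_neg] at hy
    rw [himg]
    exact hS.image continuous_fst
  · intro h K hK
    rcases hint with ⟨e, he⟩
    obtain ⟨ε, εpos, hball⟩ := Metric.isOpen_iff.1 isOpen_interior e he
    obtain ⟨r, hr⟩ := hK.isBounded.subset_ball 0
    set r' := max r 1 with hr'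
    have hr'pos : (0:ℝ) < r' := lt_of_lt_of_le one_pos (le_max_right _ _)
    have hKr : K ⊆ Metric.ball 0 r' := hr.trans (Metric.ball_subset_ball (le_max_left _ _))
    set t := r' / ε with ht
    have htpos : 0 < t := div_pos hr'pos εpos
    set x₀ := -(t • e) with hx₀
    have hKγ : ∀ v ∈ K, v - x₀ ∈ γ := by
      intro v hv
      have hnorm : ‖v‖ < r' := by simpa using hKr hv
      have h1 : (1/t) • v + e ∈ Metric.ball e ε := by
        simp only [Metric.mem_ball, dist_eq_norm, add_sub_cancel_right]
        rw [norm_smul, Real.norm_eq_abs, abs_of_pos (by positivity : (0:ℝ) < 1/t)]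
        have hε : ε = (1/t) * r' := by
          rw [ht]; field_simp
        rw [hε]
        exact mul_lt_mul_of_pos_left hnorm (by positivity)
      have h2 : (1/t) • v + e ∈ γ := interior_subset (hball h1)
      have h3 := hsmul t htpos _ h2
      have h4 : t * (1/t) = 1 := by field_simp
      rwa [smul_add, smul_smul, h4, one_smul, ← sub_neg_eq_add, ← hx₀] at h3
    set C := A ∩ {y | y - x₀ ∈ γ} with hC
    have hCcomp : IsCompact C := h x₀
    have hsub : (A ×ˢ (-γ)) ∩ (fun p : V × V => p.1 + p.2) ⁻¹' K ⊆ C ×ˢ (K + (-C)) := by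
      rintro ⟨a, y⟩ ⟨⟨ha, hy⟩, hsum⟩
      simp only [Set.mem_preimage] at hsum
      have hnegy : -y ∈ γ := by rwa [Set.mem_neg] at hy
      have haC : a ∈ C := by
        refine ⟨ha, ?_⟩
        have heq : a - x₀ = ((a + y) - x₀) + (-y) := by abel
        rw [Set.mem_setOf_eq, heq]
        exact hadd _ (hKγ _ hsum) _ hnegy
      refine ⟨haC, ?_⟩
      have hy' : y = (a + y) + (-a) := by abel
      rw [hy']
      exact Set.add_mem_add hsum (Set.neg_mem_neg.mpr haC)
    have hclosedS : IsClosed ((A ×ˢ (-γ)) ∩ (fun p : V × V => p.1 + p.2) ⁻¹' K) :=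
      (hA.prod hclosed.neg).inter (hK.isClosed.preimage (continuous_fst.add continuous_snd))
    exact (hCcomp.prod (hK.add hCcomp.neg)).of_isClosed_subset hclosedS hsub
end

section
/- For any γ-locally closed set Z in V with interior Ω = Int(Z), the set S := cl(Ω + γ) ∩ (Ω + γ^a) is the intersection of the γ^a-open set Ω + γ^a and the γ^a-closed set cl(Ω + γ), hence S is γ^a-locally closed, and Int(S) = Ω. -/
open Set Pointwise

section Aux

variable {V : Type*} [NormedAddCommGroup V] [NormedSpace ℝ V]

lemma aux_closure_add_closure (s t : Set V) :
    closure s + closure t ⊆ closure (s + t) :=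
  Set.add_subset_iff.2 fun _x hx _y hy => map_mem_closure₂ continuous_add hx hy
    fun _a ha _b hb => add_mem_add ha hb

lemma aux_gamma_add_gamma {γ : Set V} (h0 : (0:V) ∈ γ)
    (hcone : ∀ t : ℝ, 0 < t → ∀ x ∈ γ, t • x ∈ γ) (hconv : Convex ℝ γ) :
    γ + γ = γ := by
  apply Subset.antisymm
  · rintro _ ⟨a, ha, b, hb, rfl⟩
    have hm : (1/2 : ℝ) • a + (1/2 : ℝ) • b ∈ γ :=
      hconv ha hb (by norm_num) (by norm_num) (by norm_num)
    have h2 := hcone 2 (by norm_num) _ hm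
    have : (2:ℝ) • ((1/2 : ℝ) • a + (1/2 : ℝ) • b) = a + b := by
      rw [smul_add, smul_smul, smul_smul]; norm_num
    rwa [this] at h2
  · intro x hx; exact ⟨x, hx, 0, h0, add_zero x⟩

/-- key: adding an interior direction to a closure point of a γ-stable set lands inside. -/
lemma aux_closure_add_int {γ B : Set V} (hB : B + γ = B) :
    closure B + interior γ ⊆ B := by
  rintro _ ⟨b, hb, u, hu, rfl⟩
  have hWopen : IsOpen {v : V | b + u - v ∈ interior γ} :=
    isOpen_interior.preimage (by continuity)
  have hbW : b ∈ {v : V | b + u - v ∈ interior γ} := by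
    simp only [mem_setOf_eq, add_sub_cancel_left]; exact hu
  obtain ⟨v, hvW, hvB⟩ := _root_.mem_closure_iff.1 hb _ hWopen hbW
  have : v + (b + u - v) ∈ B + γ := add_mem_add hvB (interior_subset hvW)
  rwa [add_sub_cancel, hB] at this

end Aux

theorem dual_set_gammaA_locallyClosed {V : Type*} [NormedAddCommGroup V]
    [NormedSpace ℝ V] [FiniteDimensional ℝ V] (γ : Set V)
    (hcone : IsConeSet γ) (hclosed : IsClosed γ) (hconv : Convex ℝ γ)
    (hproper : γ ∩ (-γ) = {0}) (hint : (interior γ).Nonempty)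
    (Z : Set V) (hZ : GammaLocallyClosed γ Z) :
    GammaOpen (-γ) (interior Z + (-γ)) ∧
    GammaClosed (-γ) (closure (interior Z + γ)) ∧
    closure (interior Z + γ) ∩ (interior Z + (-γ)) =
      (interior Z + (-γ)) ∩ closure (interior Z + γ) ∧
    GammaLocallyClosed (-γ) (closure (interior Z + γ) ∩ (interior Z + (-γ))) ∧
    interior (closure (interior Z + γ) ∩ (interior Z + (-γ))) = interior Z := by
  obtain ⟨U, C, ⟨hUopen, hUadd⟩, ⟨hCclosed, hCadd⟩, hZUC⟩ := hZ
  obtain ⟨u, hu⟩ := hint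
  have h0 : (0:V) ∈ γ := hcone.1
  have hγγ : γ + γ = γ := aux_gamma_add_gamma h0 hcone.2 hconv
  have hnn : (-γ) + (-γ) = -γ := by
    rw [show (-γ) + (-γ) = -(γ + γ) from by rw [neg_add_rev], hγγ]
  set Ω := interior Z with hΩdef
  -- basic inclusions
  have hΩZ : Ω ⊆ Z := interior_subset
  have hΩU : Ω ⊆ U := fun x hx => (hZUC ▸ hΩZ hx).1
  have hΩC : Ω ⊆ C := fun x hx => (hZUC ▸ hΩZ hx).2
  have hsub_self_γ : Ω ⊆ Ω + γ := fun x hx => ⟨x, hx, 0, h0, add_zero x⟩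
  have hsub_self_nγ : Ω ⊆ Ω + (-γ) := fun x hx => ⟨x, hx, 0, by simpa using h0, add_zero x⟩
  -- Part 1
  have part1 : GammaOpen (-γ) (Ω + (-γ)) := by
    refine ⟨(isOpen_interior : IsOpen Ω).add_right, ?_⟩
    rw [add_assoc, hnn]
  -- Part 2
  have hAadd : closure (Ω + γ) + γ = closure (Ω + γ) := by
    apply Subset.antisymm
    · calc closure (Ω + γ) + γ ⊆ closure (Ω + γ) + closure γ := by
            exact add_subset_add_left subset_closure
        _ ⊆ closure ((Ω + γ) + γ) := aux_closure_add_closure _ _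
        _ = closure (Ω + γ) := by rw [add_assoc, hγγ]
    · intro x hx; exact ⟨x, hx, 0, h0, add_zero x⟩
  have part2 : GammaClosed (-γ) (closure (Ω + γ)) := by
    refine ⟨isClosed_closure, ?_⟩
    rwa [neg_neg]
  -- interior of S
  have hΩsubS : Ω ⊆ closure (Ω + γ) ∩ (Ω + (-γ)) :=
    fun x hx => ⟨subset_closure (hsub_self_γ hx), hsub_self_nγ hx⟩
  have hintγ_cone : ∀ ε : ℝ, 0 < ε → ε • u ∈ interior γ := by
    intro ε hε
    have hsmul : ε • γ = γ := by
      apply Subset.antisymm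
      · rintro _ ⟨y, hy, rfl⟩; exact hcone.2 ε hε y hy
      · intro y hy
        refine ⟨ε⁻¹ • y, hcone.2 ε⁻¹ (by positivity) y hy, ?_⟩
        dsimp only
        rw [smul_smul, mul_inv_cancel₀ hε.ne', one_smul]
    have : ε • u ∈ ε • interior γ := smul_mem_smul_set hu
    rwa [← interior_smul₀ hε.ne', hsmul] at this
  have part5 : interior (closure (Ω + γ) ∩ (Ω + (-γ))) = Ω := by
    apply Subset.antisymm
    · -- interior S ⊆ Z, then open ⊆ interior Z
      have hsubZ : interior (closure (Ω + γ) ∩ (Ω + (-γ))) ⊆ Z := by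
        intro x hx
        have hxA : x ∈ interior (closure (Ω + γ)) :=
          interior_mono inter_subset_left hx
        have hxN : x ∈ Ω + (-γ) := (interior_subset hx).2
        -- x ∈ C
        have hxC : x ∈ C := by
          have : x ∈ C + (-γ) := add_subset_add_right hΩC hxN
          rwa [hCadd] at this
        -- x ∈ U : find ε > 0 with x - ε • u ∈ interior (closure (Ω + γ))
        have hcont : ContinuousAt (fun ε : ℝ => x - ε • u) 0 := by
          fun_prop
        have hev : ∀ᶠ ε in nhds (0:ℝ), x - ε • u ∈ interior (closure (Ω + γ)) :=
          hcont (isOpen_interior.mem_nhds (by simpa using hxA))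
        obtain ⟨ε, hεmem, hεpos⟩ :=
          ((hev.filter_mono nhdsWithin_le_nhds).and self_mem_nhdsWithin).exists
          (f := nhdsWithin (0:ℝ) (Set.Ioi (0:ℝ)))
        have hxΩγ : x ∈ Ω + γ := by
          have hBstable : (Ω + γ) + γ = Ω + γ := by rw [add_assoc, hγγ]
          have : (x - ε • u) + ε • u ∈ Ω + γ := by
            apply aux_closure_add_int hBstable
            exact add_mem_add (interior_subset hεmem) (hintγ_cone ε hεpos)
          rwa [sub_add_cancel] at this
        have hxU : x ∈ U := by
          have : x ∈ U + γ := add_subset_add_right hΩU hxΩγ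
          rwa [hUadd] at this
        rw [hZUC]; exact ⟨hxU, hxC⟩
      exact interior_maximal hsubZ isOpen_interior
    · exact interior_maximal hΩsubS isOpen_interior
  exact ⟨part1, part2, inter_comm _ _,
    ⟨Ω + (-γ), closure (Ω + γ), part1, part2, (inter_comm _ _)⟩, part5⟩
end
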